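/- arXiv:1612.02670 — 5 statements merged into one kernel-verified Lean document; each statement's English description precedes it below -/
import Mathlib

section
/- Let G be claw-free, v a vertex, and C̄ an odd antihole contained in N(v) on vertices u_1,…,u_{2k+1} with non-edges u_i u_{i+k}. If x is a vertex outside N(v) ∪ {v} having a neighbor w ∈ N(v) with w adjacent to all of C̄, then x cannot be nonadjacent to both u_i and u_{i+k} for any i; hence the subgraph induced by C̄ ∪ {x} has stability number at most 2. -/
open Finset

variable {V : Type*}

def IsStableSet (G : SimpleGraph V) (S : Set V) : Prop :=
  S.Pairwise (fun a b => ¬ G.Adj a b)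

def ClawFree (G : SimpleGraph V) : Prop :=
  ¬ ∃ x a b c : V, G.Adj x a ∧ G.Adj x b ∧ G.Adj x c ∧
    a ≠ b ∧ a ≠ c ∧ b ≠ c ∧ ¬ G.Adj a b ∧ ¬ G.Adj a c ∧ ¬ G.Adj b c

noncomputable def stabilityNumber (G : SimpleGraph V) [Fintype V] : ℕ :=
  sSup {n | ∃ S : Finset V, IsStableSet G ↑S ∧ S.card = n}

def STAB (G : SimpleGraph V) [Fintype V] [DecidableEq V] : Set (V → ℝ) :=
  convexHull ℝ {x | ∃ S : Finset V, IsStableSet G ↑S ∧ x = fun i => if i ∈ S then (1:ℝ) else 0}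

def ESTAB (G : SimpleGraph V) : Set (V → ℝ) :=
  {x | (∀ i, 0 ≤ x i ∧ x i ≤ 1) ∧ ∀ i j, G.Adj i j → x i + x j ≤ 1}

def coneSet (K : Set (V → ℝ)) : Set (ℝ × (V → ℝ)) :=
  {p | ∃ (t : ℝ) (y : V → ℝ), 0 ≤ t ∧ y ∈ K ∧ p = (t, t • y)}

def Mplus (K : Set (V → ℝ)) [Fintype V] [DecidableEq V] :
    Set (Matrix (Option V) (Option V) ℝ) :=
  {Y | Y.PosSemidef ∧ (∀ i, Y i none = Y i i) ∧
    (∀ i : V, (Y none (some i), fun j => Y (some j) (some i)) ∈ coneSet K) ∧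
    (∀ i : V, (Y none none - Y none (some i),
        fun j => Y (some j) none - Y (some j) (some i)) ∈ coneSet K)}

def LSplus (K : Set (V → ℝ)) [Fintype V] [DecidableEq V] : Set (V → ℝ) :=
  {x | ∃ Y ∈ Mplus K, Y none none = 1 ∧ ∀ i, Y (some i) none = x i}

def cycleG (n : ℕ) : SimpleGraph (ZMod n) :=
  SimpleGraph.fromRel (fun a b => b = a + 1)

/-- Let G be claw-free, v a vertex, C̄ an odd antihole in N(v) on vertices
u_1,…,u_{2k+1} with non-edges u_i u_{i+k}. If x outside N(v) ∪ {v} has a neighbor w ∈ N(v)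
adjacent to all of C̄, then x is adjacent to u_i or u_{i+k} for every i; hence the subgraph
induced by C̄ ∪ {x} has stability number at most 2. -/
theorem stmt2 {V : Type*} [DecidableEq V] (G : SimpleGraph V) (hG : ClawFree G) (v : V)
    (k : ℕ) (hk : 2 ≤ k) (u : ZMod (2 * k + 1) → V) (hu : Function.Injective u)
    (huN : ∀ a, u a ∈ G.neighborSet v)
    (hadj : ∀ a b, a ≠ b →
      (G.Adj (u a) (u b) ↔ (a - b ≠ (k : ZMod (2 * k + 1)) ∧ b - a ≠ (k : ZMod (2 * k + 1)))))
    (x w : V) (hx : x ∉ G.neighborSet v) (hxv : x ≠ v)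
    (hw : w ∈ G.neighborSet v) (hwC : ∀ a, G.Adj w (u a)) (hxw : G.Adj x w) :
    (∀ i : ZMod (2 * k + 1), G.Adj x (u i) ∨ G.Adj x (u (i + k))) ∧
    (∀ S : Finset V, ↑S ⊆ Set.range u ∪ {x} → IsStableSet G ↑S → S.card ≤ 2) := by
  -- basic arithmetic facts in `ZMod (2*k+1)`
  have cast_inj : ∀ a b : ℕ, a < 2*k+1 → b < 2*k+1 →
      ((a : ZMod (2*k+1)) = (b : ZMod (2*k+1))) → a = b := by
    intro a b ha hb h
    have := congrArg ZMod.val h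
    rwa [ZMod.val_natCast_of_lt ha, ZMod.val_natCast_of_lt hb] at this
  have hK0 : (k : ZMod (2*k+1)) ≠ 0 := by
    intro h
    have : k = 0 := cast_inj k 0 (by omega) (by omega) (by simpa using h)
    omega
  have h3K : (3 : ZMod (2*k+1)) * k ≠ 0 := by
    intro h
    have h1 : ((3*k : ℕ) : ZMod (2*k+1)) = ((k-1 : ℕ) : ZMod (2*k+1)) := by
      rw [show 3*k = (2*k+1) + (k-1) by omega, Nat.cast_add, ZMod.natCast_self, zero_add]
    have h2 : ((3*k : ℕ) : ZMod (2*k+1)) = 0 := by push_cast; linear_combination h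
    have : k - 1 = 0 := cast_inj (k-1) 0 (by omega) (by omega) (by rw [← h1, h2]; simp)
    omega
  have hne_addk : ∀ a : ZMod (2*k+1), a ≠ a + (k : ZMod (2*k+1)) := by
    intro a h
    exact hK0 (by linear_combination -h)
  have hxu : ∀ a, x ≠ u a := fun a h => hx (h ▸ huN a)
  have hnadjk : ∀ a : ZMod (2*k+1), ¬ G.Adj (u a) (u (a + k)) := by
    intro a hA
    exact ((hadj a (a+k) (hne_addk a)).mp hA).2 (by ring)
  have part1 : ∀ i : ZMod (2 * k + 1), G.Adj x (u i) ∨ G.Adj x (u (i + k)) := by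
    intro i
    by_contra h
    push_neg at h
    exact hG ⟨w, x, u i, u (i+k), hxw.symm, hwC i, hwC (i+k), hxu i, hxu (i+k),
      fun he => hne_addk i (hu he), h.1, h.2, hnadjk i⟩
  refine ⟨part1, ?_⟩
  have huu : ∀ a b : ZMod (2*k+1), a ≠ b → ¬ G.Adj (u a) (u b) →
      (a - b = (k : ZMod (2*k+1)) ∨ b - a = (k : ZMod (2*k+1))) := by
    intro a b hab hnadj
    by_contra h
    push_neg at h
    exact hnadj ((hadj a b hab).mpr ⟨h.1, h.2⟩)
  have two : ∀ a b : ZMod (2*k+1), a ≠ b → ¬ G.Adj x (u a) → ¬ G.Adj x (u b) →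
      ¬ G.Adj (u a) (u b) → False := by
    intro a b hab hxa hxb hab'
    rcases huu a b hab hab' with e | e
    · have ha : a = b + (k : ZMod (2*k+1)) := by linear_combination e
      rcases part1 b with h | h
      · exact hxb h
      · rw [← ha] at h; exact hxa h
    · have hb : b = a + (k : ZMod (2*k+1)) := by linear_combination e
      rcases part1 a with h | h
      · exact hxa h
      · rw [← hb] at h; exact hxb h
  have three : ∀ a b c : ZMod (2*k+1), a ≠ b → a ≠ c → b ≠ c →
      ¬ G.Adj (u a) (u b) → ¬ G.Adj (u a) (u c) → ¬ G.Adj (u b) (u c) → False := by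
    intro a b c hab hac hbc nab nac nbc
    have e1 := huu a b hab nab
    have e2 := huu a c hac nac
    have e3 := huu b c hbc nbc
    rcases e1 with e1 | e1 <;> rcases e2 with e2 | e2 <;> rcases e3 with e3 | e3 <;>
      first
        | exact hK0 (by linear_combination e2 - e1 - e3)
        | exact hK0 (by linear_combination e1 - e2 - e3)
        | exact hK0 (by linear_combination -e1 - e2 + e3)
        | exact hK0 (by linear_combination -e1 + e2 - e3)
        | exact h3K (by linear_combination -e1 - e2 - e3)
  intro S hSsub hSst
  by_contra hcard
  push_neg at hcard
  obtain ⟨T, hTS, hT3⟩ := Finset.exists_subset_card_eq (show 3 ≤ S.card by omega)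
  obtain ⟨p, q, r, hpq, hpr, hqr, rfl⟩ := Finset.card_eq_three.mp hT3
  have hpS : p ∈ (↑S : Set V) := hTS (by simp)
  have hqS : q ∈ (↑S : Set V) := hTS (by simp)
  have hrS : r ∈ (↑S : Set V) := hTS (by simp)
  have npq : ¬ G.Adj p q := hSst hpS hqS hpq
  have npr : ¬ G.Adj p r := hSst hpS hrS hpr
  have nqr : ¬ G.Adj q r := hSst hqS hrS hqr
  have mem : ∀ y, y ∈ (↑S : Set V) → y = x ∨ ∃ a, u a = y := by
    intro y hy
    rcases hSsub hy with h | h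
    · exact Or.inr h
    · exact Or.inl h
  rcases mem p hpS with rfl | ⟨a, rfl⟩ <;> rcases mem q hqS with rfl | ⟨b, rfl⟩ <;>
    rcases mem r hrS with rfl | ⟨c, rfl⟩
  · exact hpq rfl
  · exact hpq rfl
  · exact hpr rfl
  · exact two b c (fun h => hqr (congrArg u h)) npq npr nqr
  · exact hqr rfl
  · exact two a c (fun h => hpr (congrArg u h)) (fun h => npq h.symm) nqr npr
  · exact two a b (fun h => hpq (congrArg u h)) (fun h => npr h.symm)
      (fun h => nqr h.symm) npq
  · exact three a b c (fun h => hpq (congrArg u h)) (fun h => hpr (congrArg u h))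
      (fun h => hqr (congrArg u h)) npq npr nqr
end

section
/- Let G be a claw-free graph containing an induced odd antihole C̄_{2k+1} with k ≥ 2, and a vertex v adjacent to all vertices of C̄. If y is a vertex nonadjacent to v that has a neighbor in C̄ and belongs to a stable set {y, u_i, u_{i+k}} with u_i, u_{i+k} nonadjacent vertices of C̄, then k = 2 (i.e., C̄ is the 5-antihole C_5) and y has exactly two neighbors in C̄, and these are consecutive on the corresponding 5-cycle. -/
open Finset

variable {V : Type*}

lemma zmodcast_inj (n d e : ℕ) [NeZero n] (hd : d < n) (he : e < n)
    (h : (d : ZMod n) = e) : d = e := by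
  have h2 := congrArg ZMod.val h
  rwa [ZMod.val_natCast_of_lt hd, ZMod.val_natCast_of_lt he] at h2

lemma zmod_cast_eq_cases (n d e : ℕ) [NeZero n] (hd : d < n) (he : e < 2*n)
    (h : (d : ZMod n) = e) : d = e ∨ d + n = e := by
  have h2 := congrArg ZMod.val h
  rw [ZMod.val_natCast_of_lt hd, ZMod.val_natCast] at h2
  rcases Nat.lt_or_ge e n with h3 | h3
  · left; rwa [Nat.mod_eq_of_lt h3] at h2
  · right
    have h5 : e % n = e - n := by
      rw [Nat.mod_eq_sub_mod h3, Nat.mod_eq_of_lt (by omega)]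
    omega

/-- Claw-free G with induced odd antihole C̄_{2k+1} (k ≥ 2) and a vertex v
adjacent to all of C̄. If y is nonadjacent to v, has a neighbor in C̄ and belongs to a
stable set {y, u_i, u_{i+k}}, then k = 2 (C̄ is the 5-antihole, i.e. C_5) and y has exactly
two neighbors in C̄, consecutive on the corresponding 5-cycle. -/
theorem stmt4 {V : Type*} (G : SimpleGraph V) (hG : ClawFree G) (k : ℕ) (hk : 2 ≤ k)
    (u : ZMod (2 * k + 1) → V) (hu : Function.Injective u)
    (hadj : ∀ a b, a ≠ b →
      (G.Adj (u a) (u b) ↔ (a - b ≠ (k : ZMod (2 * k + 1)) ∧ b - a ≠ (k : ZMod (2 * k + 1)))))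
    (v : V) (hvC : ∀ a, G.Adj v (u a)) (hvr : v ∉ Set.range u)
    (y : V) (hyv : ¬ G.Adj v y) (hyne : y ≠ v) (hyr : y ∉ Set.range u)
    (hyC : ∃ a, G.Adj y (u a))
    (i : ZMod (2 * k + 1)) (hyi : ¬ G.Adj y (u i)) (hyik : ¬ G.Adj y (u (i + k))) :
    k = 2 ∧ ∃ j : ZMod (2 * k + 1), {a : ZMod (2 * k + 1) | G.Adj y (u a)} = {j, j + 1} := by
  haveI : NeZero (2 * k + 1) := ⟨by omega⟩
  have h0 : ((2 * k + 1 : ℕ) : ZMod (2 * k + 1)) = 0 := ZMod.natCast_self _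
  have adj2 : ∀ (b : ZMod (2 * k + 1)) (d e : ℕ), d < 2*k+1 → e < 2*k+1 → d ≠ e →
      d ≠ e + k → d + (2*k+1) ≠ e + k → e ≠ d + k → e + (2*k+1) ≠ d + k →
      G.Adj (u (b + d)) (u (b + e)) := by
    intro b d e hd he h1 h2 h3 h4 h5
    have hne : b + (d : ZMod (2 * k + 1)) ≠ b + e := by
      intro h
      have hx : (d : ZMod (2 * k + 1)) = e := by linear_combination h
      exact h1 (zmodcast_inj _ d e hd he hx)
    rw [hadj _ _ hne]
    constructor
    · intro hEq
      have hx : (d : ZMod (2 * k + 1)) = ((e + k : ℕ) : ZMod (2 * k + 1)) := by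
        push_cast; linear_combination hEq
      rcases zmod_cast_eq_cases _ d (e+k) hd (by omega) hx with h | h <;> omega
    · intro hEq
      have hx : (e : ZMod (2 * k + 1)) = ((d + k : ℕ) : ZMod (2 * k + 1)) := by
        push_cast; linear_combination hEq
      rcases zmod_cast_eq_cases _ e (d+k) he (by omega) hx with h | h <;> omega
  have hNAdj : ∀ b : ZMod (2 * k + 1), ¬ G.Adj (u b) (u (b + (k : ℕ))) := by
    intro b h
    have hne : b ≠ b + (k : ℕ) := by
      intro h'
      have hx : ((k : ℕ) : ZMod (2 * k + 1)) = ((0 : ℕ) : ZMod (2 * k + 1)) := by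
        push_cast; linear_combination -h'
      exact absurd (zmodcast_inj _ k 0 (by omega) (by omega) hx) (by omega)
    rw [hadj _ _ hne] at h
    exact h.2 (by ring)
  have claw0 : ∀ (c b : ZMod (2 * k + 1)), G.Adj y (u c) → ¬ G.Adj y (u b) →
      ¬ G.Adj y (u (b + (k : ℕ))) → G.Adj (u c) (u b) → G.Adj (u c) (u (b + (k : ℕ))) →
      False := by
    intro c b hyc hyb hybk hcb hcbk
    apply hG
    refine ⟨u c, y, u b, u (b + (k : ℕ)), hyc.symm, hcb, hcbk, ?_, ?_, ?_, hyb, hybk, hNAdj b⟩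
    · intro h; exact hyr ⟨b, h.symm⟩
    · intro h; exact hyr ⟨b + (k : ℕ), h.symm⟩
    · intro h
      have h2 := hu h
      have hx : ((k : ℕ) : ZMod (2 * k + 1)) = ((0 : ℕ) : ZMod (2 * k + 1)) := by
        push_cast; linear_combination -h2
      exact absurd (zmodcast_inj _ k 0 (by omega) (by omega) hx) (by omega)
  have hmem : ∀ a : ZMod (2 * k + 1), G.Adj y (u a) →
      a = i + ((2*k : ℕ) : ZMod (2 * k + 1)) ∨ a = i + ((k+1 : ℕ) : ZMod (2 * k + 1)) := by
    intro a ha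
    set d := (a - i).val with hdd
    have hdlt : d < 2*k+1 := ZMod.val_lt _
    have hai : a = i + (d : ZMod (2 * k + 1)) := by
      have h2 : ((a - i).val : ZMod (2 * k + 1)) = a - i := ZMod.natCast_rightInverse (a - i)
      rw [hdd, h2]; ring
    have hd0 : d ≠ 0 := by
      intro h
      rw [h] at hai
      simp only [Nat.cast_zero, add_zero] at hai
      exact hyi (hai ▸ ha)
    have hdk : d ≠ k := by
      intro h
      rw [h] at hai
      exact hyik (hai ▸ ha)
    by_contra hcon
    push_neg at hcon
    obtain ⟨h1, h2⟩ := hcon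
    have hd2k : d ≠ 2*k := fun h => h1 (by rw [hai, h])
    have hdk1 : d ≠ k+1 := fun h => h2 (by rw [hai, h])
    apply claw0 (i + (d : ZMod (2 * k + 1))) i (hai ▸ ha) hyi hyik
    · have h3 := adj2 i d 0 hdlt (by omega) (by omega) (by omega) (by omega) (by omega) (by omega)
      simpa using h3
    · exact adj2 i d k hdlt (by omega) (by omega) (by omega) (by omega) (by omega) (by omega)
  have hAtoB : G.Adj y (u (i + ((2*k : ℕ) : ZMod (2 * k + 1)))) →
      G.Adj y (u (i + ((k+1 : ℕ) : ZMod (2 * k + 1)))) := by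
    intro hA
    by_contra hB
    have he : i + ((k+1 : ℕ) : ZMod (2 * k + 1)) + ((k : ℕ) : ZMod (2 * k + 1)) = i := by
      push_cast at h0 ⊢; linear_combination h0
    apply claw0 (i + ((2*k : ℕ) : ZMod (2 * k + 1))) (i + ((k+1 : ℕ) : ZMod (2 * k + 1))) hA hB
    · rw [he]; exact hyi
    · exact adj2 i (2*k) (k+1) (by omega) (by omega) (by omega) (by omega) (by omega)
        (by omega) (by omega)
    · rw [he]
      have h3 := adj2 i (2*k) 0 (by omega) (by omega) (by omega) (by omega) (by omega)
        (by omega) (by omega)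
      simpa using h3
  have hBtoA : G.Adj y (u (i + ((k+1 : ℕ) : ZMod (2 * k + 1)))) →
      G.Adj y (u (i + ((2*k : ℕ) : ZMod (2 * k + 1)))) := by
    intro hB
    by_contra hA
    have he : i + ((k : ℕ) : ZMod (2 * k + 1)) + ((k : ℕ) : ZMod (2 * k + 1))
        = i + ((2*k : ℕ) : ZMod (2 * k + 1)) := by push_cast; ring
    apply claw0 (i + ((k+1 : ℕ) : ZMod (2 * k + 1))) (i + ((k : ℕ) : ZMod (2 * k + 1))) hB hyik
    · rw [he]; exact hA
    · exact adj2 i (k+1) k (by omega) (by omega) (by omega) (by omega) (by omega)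
        (by omega) (by omega)
    · rw [he]
      exact adj2 i (k+1) (2*k) (by omega) (by omega) (by omega) (by omega) (by omega)
        (by omega) (by omega)
  have hAB : G.Adj y (u (i + ((2*k : ℕ) : ZMod (2 * k + 1)))) ∧
      G.Adj y (u (i + ((k+1 : ℕ) : ZMod (2 * k + 1)))) := by
    obtain ⟨a0, ha0⟩ := hyC
    rcases hmem a0 ha0 with h | h
    · exact ⟨h ▸ ha0, hAtoB (h ▸ ha0)⟩
    · exact ⟨hBtoA (h ▸ ha0), h ▸ ha0⟩
  have hk2 : k = 2 := by
    by_contra hnek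
    have hk3 : 3 ≤ k := by omega
    have hrw : i + ((2*k-1 : ℕ) : ZMod (2 * k + 1)) + ((k : ℕ) : ZMod (2 * k + 1))
        = i + ((k-2 : ℕ) : ZMod (2 * k + 1)) := by
      push_cast [Nat.cast_sub (show 1 ≤ 2*k by omega), Nat.cast_sub (show 2 ≤ k by omega)]
      push_cast at h0
      linear_combination h0
    have hnb : ¬ G.Adj y (u (i + ((2*k-1 : ℕ) : ZMod (2 * k + 1)))) := by
      intro h
      rcases hmem _ h with h' | h' <;>
        exact absurd (zmodcast_inj _ _ _ (by omega) (by omega) (add_left_cancel h'))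
          (by omega)
    have hnbk : ¬ G.Adj y (u (i + ((k-2 : ℕ) : ZMod (2 * k + 1)))) := by
      intro h
      rcases hmem _ h with h' | h' <;>
        exact absurd (zmodcast_inj _ _ _ (by omega) (by omega) (add_left_cancel h'))
          (by omega)
    apply claw0 (i + ((2*k : ℕ) : ZMod (2 * k + 1))) (i + ((2*k-1 : ℕ) : ZMod (2 * k + 1)))
      hAB.1 hnb
    · rw [hrw]; exact hnbk
    · exact adj2 i (2*k) (2*k-1) (by omega) (by omega) (by omega) (by omega) (by omega)
        (by omega) (by omega)
    · rw [hrw]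
      exact adj2 i (2*k) (k-2) (by omega) (by omega) (by omega) (by omega) (by omega)
        (by omega) (by omega)
  refine ⟨hk2, ?_⟩
  subst hk2
  refine ⟨i + ((2+1 : ℕ) : ZMod (2 * 2 + 1)), ?_⟩
  have hc : ((2+1 : ℕ) : ZMod (2 * 2 + 1)) + 1 = ((2*2 : ℕ) : ZMod (2 * 2 + 1)) := by decide
  ext a
  simp only [Set.mem_setOf_eq, Set.mem_insert_iff, Set.mem_singleton_iff]
  constructor
  · intro h
    rcases hmem a h with h' | h'
    · right; rw [h', ← hc, ← add_assoc]
    · left; exact h'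
  · rintro (h | h)
    · rw [h]; exact hAB.2
    · rw [h, add_assoc, hc]; exact hAB.1
end

section
/- For every graph G and every family F of cliques and integer p with 1 ≤ p < |F|, the clique family inequality (p−r)·Σ_{i∈W} x_i + (p−r−1)·Σ_{i∈W_o} x_i ≤ (p−r)·⌊n/p⌋ is valid for STAB(G), where n = |F|, r = n mod p, r ≥ 1, W is the set of vertices in at least p cliques of F, and W_o the set of vertices in exactly p−1 cliques of F. -/
open Finset

variable {V : Type*}

/-! Every stable set `S` meets each clique of `F` at most once, so the degrees `d v` (the
number of cliques of `F` containing `v`) sum over `S` to at most `n = |F| = p q + r`, where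
`q = ⌊n / p⌋`. Vertices of `W` contribute at least `p` and those of `W_o` exactly `p - 1`, so
`p a + (p - 1) b ≤ p q + r` with `a = |S ∩ W|`, `b = |S ∩ W_o|`. If `a + b ≤ q` the inequality
is immediate; otherwise subtracting `r (a + b) ≥ r (q + 1)` gives it. The inequality is linear,
so it passes from the incidence vectors to their convex hull. -/

theorem forall_mem_STAB_of_convex {V : Type*} [Fintype V] [DecidableEq V] {G : SimpleGraph V}
    {P : (V → ℝ) → Prop} (hP : Convex ℝ {y | P y})
    (h : ∀ S : Finset V, IsStableSet G ↑S → P fun i => if i ∈ S then 1 else 0) :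
    ∀ x ∈ STAB G, P x :=
  fun _ hx => convexHull_min (by rintro _ ⟨S, hS, rfl⟩; exact h S hS) hP hx

theorem convex_setOf_mul_sum_add_mul_sum_le {V : Type*} (A B : Finset V) (a b c : ℝ) :
    Convex ℝ {y : V → ℝ | a * ∑ i ∈ A, y i + b * ∑ i ∈ B, y i ≤ c} := by
  refine convex_halfSpace_le ⟨fun y z => ?_, fun t y => ?_⟩ c
  · simp only [Pi.add_apply, sum_add_distrib]
    ring
  · simp only [Pi.smul_apply, smul_eq_mul, ← mul_sum]
    ring

theorem IsStableSet.card_filter_mem_le_one {V : Type*} [DecidableEq V] {G : SimpleGraph V}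
    {S C : Finset V} (hS : IsStableSet G ↑S) (hC : G.IsClique (C : Set V)) :
    (S.filter (· ∈ C)).card ≤ 1 := by
  rw [card_le_one]
  intro u hu v hv
  simp only [mem_filter] at hu hv
  by_contra hne
  exact hS hu.1 hv.1 hne (hC hu.2 hv.2 hne)

theorem IsStableSet.sum_card_filter_mem_le {V : Type*} [DecidableEq V] {G : SimpleGraph V}
    {S : Finset V} (hS : IsStableSet G ↑S) {F : Finset (Finset V)}
    (hF : ∀ C ∈ F, G.IsClique (C : Set V)) :
    ∑ v ∈ S, (F.filter (v ∈ ·)).card ≤ F.card :=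
  calc ∑ v ∈ S, (F.filter (v ∈ ·)).card
      = ∑ C ∈ F, (S.filter (· ∈ C)).card := by simp only [card_filter]; exact sum_comm
    _ ≤ ∑ _C ∈ F, 1 := sum_le_sum fun C hC => hS.card_filter_mem_le_one (hF C hC)
    _ = F.card := by rw [card_eq_sum_ones]

theorem mul_card_inter_add_mul_card_inter_le_sum {V : Type*} [DecidableEq V] {d : V → ℕ}
    {p : ℕ} (hp : 1 ≤ p) {A B : Finset V} (hA : ∀ v ∈ A, p ≤ d v) (hB : ∀ v ∈ B, d v = p - 1)
    (S : Finset V) :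
    p * (A ∩ S).card + (p - 1) * (B ∩ S).card ≤ ∑ v ∈ S, d v := by
  have hdisj : Disjoint (A ∩ S) (B ∩ S) := by
    refine disjoint_left.mpr fun v hvA hvB => ?_
    have := hA v (mem_inter.mp hvA).1
    have := hB v (mem_inter.mp hvB).1
    omega
  have hA' : p * (A ∩ S).card ≤ ∑ v ∈ A ∩ S, d v := by
    simpa [mul_comm] using card_nsmul_le_sum (A ∩ S) d p fun v hv => hA v (mem_inter.mp hv).1
  have hB' : (p - 1) * (B ∩ S).card = ∑ v ∈ B ∩ S, d v := by
    rw [sum_congr rfl fun v hv => hB v (mem_inter.mp hv).1, sum_const, smul_eq_mul, mul_comm]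
  calc p * (A ∩ S).card + (p - 1) * (B ∩ S).card
      ≤ ∑ v ∈ (A ∩ S) ∪ (B ∩ S), d v := by rw [sum_union hdisj]; omega
    _ ≤ ∑ v ∈ S, d v :=
        sum_le_sum_of_subset (union_subset inter_subset_right inter_subset_right)

theorem sub_mul_add_sub_sub_one_mul_le {p r q a b : ℕ} (hp : 1 ≤ p) (hrp : r ≤ p)
    (h : p * a + (p - 1) * b ≤ p * q + r) :
    ((p : ℝ) - r) * a + ((p : ℝ) - r - 1) * b ≤ ((p : ℝ) - r) * q := by
  have h' : (p : ℝ) * a + ((p : ℝ) - 1) * b ≤ p * q + r := by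
    have := (Nat.cast_le (α := ℝ)).mpr h
    push_cast [Nat.cast_sub hp] at this
    exact this
  have hrp' : (r : ℝ) ≤ p := by exact_mod_cast hrp
  have hb : (0 : ℝ) ≤ b := b.cast_nonneg
  rcases le_or_gt (a + b) q with hab | hab
  · have hab' : (a : ℝ) + b ≤ q := by exact_mod_cast hab
    nlinarith [mul_le_mul_of_nonneg_left hab' (sub_nonneg.mpr hrp')]
  · have hab' : (q : ℝ) + 1 ≤ a + b := by exact_mod_cast hab
    nlinarith [mul_le_mul_of_nonneg_left hab' (r.cast_nonneg : (0 : ℝ) ≤ r)]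

theorem sum_ite_mem_eq_card_inter {V : Type*} [DecidableEq V] (A S : Finset V) :
    ∑ i ∈ A, (if i ∈ S then (1 : ℝ) else 0) = (A ∩ S).card := by
  rw [sum_boole, filter_mem_eq_inter]

theorem stmt9_general {V : Type*} [Fintype V] [DecidableEq V] (G : SimpleGraph V)
    (F : Finset (Finset V)) (hF : ∀ C ∈ F, G.IsClique (C : Set V))
    (p : ℕ) (hp1 : 1 ≤ p) :
    ∀ x ∈ STAB G,
      ((p : ℝ) - (F.card % p : ℕ)) *
          ∑ i ∈ Finset.univ.filter (fun v => p ≤ (F.filter (fun C => v ∈ C)).card), x i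
        + (((p : ℝ) - (F.card % p : ℕ)) - 1) *
          ∑ i ∈ Finset.univ.filter (fun v => (F.filter (fun C => v ∈ C)).card = p - 1), x i
        ≤ ((p : ℝ) - (F.card % p : ℕ)) * ((F.card / p : ℕ) : ℝ) := by
  refine forall_mem_STAB_of_convex (convex_setOf_mul_sum_add_mul_sum_le _ _ _ _ _) fun S hS => ?_
  simp only [sum_ite_mem_eq_card_inter]
  refine sub_mul_add_sub_sub_one_mul_le hp1 (Nat.mod_lt _ hp1).le ?_
  calc _ ≤ ∑ v ∈ S, (F.filter (v ∈ ·)).card :=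
        mul_card_inter_add_mul_card_inter_le_sum hp1 (fun v hv => (mem_filter.mp hv).2)
          (fun v hv => (mem_filter.mp hv).2) S
    _ ≤ F.card := hS.sum_card_filter_mem_le hF
    _ = _ := (Nat.div_add_mod _ _).symm

/-- validity of the clique family inequality (F, p) for STAB(G). -/
theorem stmt9 {V : Type*} [Fintype V] [DecidableEq V] (G : SimpleGraph V)
    (F : Finset (Finset V)) (hF : ∀ C ∈ F, G.IsClique (C : Set V))
    (p : ℕ) (hp1 : 1 ≤ p) (hpn : p < F.card) (hr : 1 ≤ F.card % p) :
    ∀ x ∈ STAB G,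
      ((p : ℝ) - (F.card % p : ℕ)) *
          ∑ i ∈ Finset.univ.filter (fun v => p ≤ (F.filter (fun C => v ∈ C)).card), x i
        + (((p : ℝ) - (F.card % p : ℕ)) - 1) *
          ∑ i ∈ Finset.univ.filter (fun v => (F.filter (fun C => v ∈ C)).card = p - 1), x i
        ≤ ((p : ℝ) - (F.card % p : ℕ)) * ((F.card / p : ℕ) : ℝ) :=
  stmt9_general G F hF p hp1
end

section
/- Let G be a claw-free graph, v a vertex completely joined to an induced 5-cycle C on u_1,…,u_5, and let y be a vertex nonadjacent to v with a neighbor u_j in C such that {y, u_i, u_{i+2}} is a stable set for some i (indices mod 5). Then the neighbors of y in C are exactly two consecutive vertices of C. -/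
open Finset

variable {V : Type*}

/-- Claw-free G, v completely joined to an induced 5-cycle C on u_1,…,u_5,
y nonadjacent to v with a neighbor in C and {y, u_i, u_{i+2}} a stable set. Then the
neighbors of y in C are exactly two consecutive vertices of C. -/
theorem stmt14 {V : Type*} (G : SimpleGraph V) (hG : ClawFree G)
    (c : ZMod 5 → V) (hc : Function.Injective c)
    (hadj : ∀ a b, a ≠ b → (G.Adj (c a) (c b) ↔ (b = a + 1 ∨ a = b + 1)))
    (v : V) (hvC : ∀ a, G.Adj v (c a)) (hvr : v ∉ Set.range c)
    (y : V) (hyv : ¬ G.Adj v y) (hyne : y ≠ v) (hyr : y ∉ Set.range c)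
    (j : ZMod 5) (hyj : G.Adj y (c j))
    (i : ZMod 5) (hyi : ¬ G.Adj y (c i)) (hyi2 : ¬ G.Adj y (c (i + 2))) :
    ∃ j₀ : ZMod 5, {a : ZMod 5 | G.Adj y (c a)} = {j₀, j₀ + 1} := by
  -- arithmetic facts in ZMod 5
  have e41 : ∀ x : ZMod 5, x + 4 + 1 = x := by decide
  have e44 : ∀ x : ZMod 5, x ≠ x + 4 := by decide
  have e14 : ∀ x : ZMod 5, x + 4 ≠ x + 1 := by decide
  have e01 : ∀ x : ZMod 5, x ≠ x + 1 := by decide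
  have enon1 : ∀ x : ZMod 5, x + 1 ≠ x + 4 + 1 := by decide
  have enon2 : ∀ x : ZMod 5, x + 4 ≠ x + 1 + 1 := by decide
  have e114 : ∀ x : ZMod 5, x + 1 + 4 = x := by decide
  have e344 : ∀ x : ZMod 5, x + 3 + 4 = x + 2 := by decide
  have e444 : ∀ x : ZMod 5, x + 4 + 4 = x + 3 := by decide
  -- Step 1: if y is adjacent to c a, it is adjacent to c (a+4) or c (a+1)
  have h1 : ∀ a : ZMod 5, G.Adj y (c a) → G.Adj y (c (a + 4)) ∨ G.Adj y (c (a + 1)) := by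
    intro a ha
    by_contra h
    push_neg at h
    obtain ⟨hl, hr⟩ := h
    apply hG
    refine ⟨c a, y, c (a + 4), c (a + 1), ha.symm, ?_, ?_, ?_, ?_, ?_, ?_, ?_, ?_⟩
    · exact (hadj a (a + 4) (e44 a)).2 (Or.inr (e41 a).symm)
    · exact (hadj a (a + 1) (e01 a)).2 (Or.inl rfl)
    · exact fun h => hyr ⟨a + 4, h.symm⟩
    · exact fun h => hyr ⟨a + 1, h.symm⟩
    · exact fun h => e14 a (hc h)
    · exact fun h => hl h
    · exact fun h => hr h
    · intro h
      rcases (hadj (a + 4) (a + 1) (e14 a)).1 h with h' | h'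
      · exact enon1 a h'
      · exact enon2 a h'
  -- Step 2: y is not adjacent to c (i+1)
  have hni1 : ¬ G.Adj y (c (i + 1)) := by
    intro h
    rcases h1 (i + 1) h with h' | h'
    · rw [e114 i] at h'
      exact hyi h'
    · rw [show i + 1 + 1 = i + 2 by ring] at h'
      exact hyi2 h'
  -- Step 3: j is i+3 or i+4, and in both cases y is adjacent to both c(i+3) and c(i+4)
  have quint : ∀ a : ZMod 5, a = i ∨ a = i + 1 ∨ a = i + 2 ∨ a = i + 3 ∨ a = i + 4 := by
    intro a
    have h := (by decide : ∀ d : ZMod 5, d = 0 ∨ d = 1 ∨ d = 2 ∨ d = 3 ∨ d = 4) (a - i)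
    rcases h with h | h | h | h | h
    · exact Or.inl (by rw [sub_eq_iff_eq_add] at h; rw [h]; ring)
    · exact Or.inr (Or.inl (by rw [sub_eq_iff_eq_add] at h; rw [h]; ring))
    · exact Or.inr (Or.inr (Or.inl (by rw [sub_eq_iff_eq_add] at h; rw [h]; ring)))
    · exact Or.inr (Or.inr (Or.inr (Or.inl (by rw [sub_eq_iff_eq_add] at h; rw [h]; ring))))
    · exact Or.inr (Or.inr (Or.inr (Or.inr (by rw [sub_eq_iff_eq_add] at h; rw [h]; ring))))
  have key : G.Adj y (c (i + 3)) ∧ G.Adj y (c (i + 4)) := by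
    rcases quint j with h | h | h | h | h
    · exact absurd (h ▸ hyj) hyi
    · exact absurd (h ▸ hyj) hni1
    · exact absurd (h ▸ hyj) hyi2
    · refine ⟨h ▸ hyj, ?_⟩
      rcases h1 (i + 3) (h ▸ hyj) with h' | h'
      · rw [e344 i] at h'
        exact absurd h' hyi2
      · rwa [show i + 3 + 1 = i + 4 by ring] at h'
    · refine ⟨?_, h ▸ hyj⟩
      rcases h1 (i + 4) (h ▸ hyj) with h' | h'
      · rwa [e444 i] at h'
      · rw [e41 i] at h'
        exact absurd h' hyi
  refine ⟨i + 3, ?_⟩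
  ext a
  simp only [Set.mem_setOf_eq, Set.mem_insert_iff, Set.mem_singleton_iff]
  constructor
  · intro ha
    rcases quint a with h | h | h | h | h
    · exact absurd (h ▸ ha) hyi
    · exact absurd (h ▸ ha) hni1
    · exact absurd (h ▸ ha) hyi2
    · exact Or.inl h
    · exact Or.inr (by rw [h]; ring)
  · rintro (h | h)
    · exact h ▸ key.1
    · rw [h, show i + 3 + 1 = i + 4 by ring]
      exact key.2
end

section
/- Every facet-defining graph G (i.e., STAB(G) has a full-support facet) with at least 2 vertices has no clique cutset: there is no clique Q in G such that G − Q is disconnected. -/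
open Finset

variable {V : Type*}

/-- STAB(G) has a full-support facet: a valid inequality with all coefficients nonzero
whose equality set contains |V| affinely independent points of STAB(G). -/
def HasFullSupportFacet {V : Type*} [Fintype V] [DecidableEq V] (G : SimpleGraph V) : Prop :=
  ∃ (a : V → ℝ) (b : ℝ), (∀ i, a i ≠ 0) ∧
    (∀ x ∈ STAB G, ∑ i, a i * x i ≤ b) ∧
    ∃ f : Fin (Fintype.card V) → (V → ℝ), AffineIndependent ℝ f ∧
      ∀ m, f m ∈ STAB G ∧ ∑ i, a i * f m i = b

/-
Let `a ⬝ᵥ x ≤ b` define a full-support facet and let the clique `Q` separate a set `A` of vertices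
from a vertex `y`. A stable set meets `Q` in at most one vertex, and exchanging the `A`-parts of
two tight stable sets with the same trace on `Q` keeps them stable, so the `A`-weight of a tight
stable set depends only on its trace on `Q`. Correcting by constants on `Q` turns the `A`-part of
`a` into a second equation `l ⬝ᵥ x = c` satisfied by all tight stable sets, hence by the whole
facet. Since `l` vanishes at `y` but not on `A`, the two equations are independent, and the facet
has dimension at most `|V| - 2`.
-/

theorem LinearMap.apply_eq_of_mem_convexHull_of_apply_eq {E : Type*} [AddCommGroup E]
    [Module ℝ E] {s : Set E} {φ ψ : E →ₗ[ℝ] ℝ} {b c : ℝ} (hφ : ∀ z ∈ s, φ z ≤ b)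
    (hψ : ∀ z ∈ s, φ z = b → ψ z = c) {p : E} (hp : p ∈ convexHull ℝ s) (hpb : φ p = b) :
    ψ p = c := by
  suffices hK : Convex ℝ {z | φ z ≤ b ∧ (φ z = b → ψ z = c)} from
    (convexHull_min (fun z hz => Set.mem_ofPred.2 ⟨hφ z hz, hψ z hz⟩) hK hp).2 hpb
  rintro z ⟨hzb, hzc⟩ w ⟨hwb, hwc⟩ μ ν hμ hν hμν
  have hz : 0 ≤ μ * (b - φ z) := mul_nonneg hμ (by linarith)
  have hw : 0 ≤ ν * (b - φ w) := mul_nonneg hν (by linarith)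
  have hsum : μ * (b - φ z) + ν * (b - φ w) = b - φ (μ • z + ν • w) := by
    simp only [map_add, map_smul, smul_eq_mul]
    linear_combination b * hμν
  refine ⟨by linarith, fun h => ?_⟩
  have hz' : μ * ψ z = μ * c := by
    rcases mul_eq_zero.1 (show μ * (b - φ z) = 0 by linarith) with h0 | h0
    · simp [h0]
    · rw [hzc (by linarith)]
  have hw' : ν * ψ w = ν * c := by
    rcases mul_eq_zero.1 (show ν * (b - φ w) = 0 by linarith) with h0 | h0
    · simp [h0]
    · rw [hwc (by linarith)]
  simp only [map_add, map_smul, smul_eq_mul]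
  rw [hz', hw', ← add_mul, hμν, one_mul]

theorem AffineIndependent.card_add_finrank_le {k ι E F : Type*} [Field k] [AddCommGroup E]
    [Module k E] [FiniteDimensional k E] [AddCommGroup F] [Module k F] [Fintype ι]
    {f : ι → E} (hf : AffineIndependent k f) {L : E →ₗ[k] F} (hL : Function.Surjective L)
    (hLf : ∀ i j, L (f i) = L (f j)) :
    Fintype.card ι + Module.finrank k F ≤ Module.finrank k E + 1 := by
  have hspan : vectorSpan k (Set.range f) ≤ LinearMap.ker L := by
    rw [vectorSpan_def, Submodule.span_le]
    rintro _ ⟨_, ⟨i, rfl⟩, _, ⟨j, rfl⟩, rfl⟩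
    simp [hLf i j]
  have hrank := L.finrank_range_add_finrank_ker
  rw [LinearMap.range_eq_top.2 hL, finrank_top] at hrank
  have := hf.card_le_finrank_succ.trans (Nat.succ_le_succ (Submodule.finrank_mono hspan))
  omega

theorem LinearMap.prod_surjective_of_triangular {K E : Type*} [Field K] [AddCommGroup E]
    [Module K E] {φ ψ : E →ₗ[K] K} {u v : E} (hu : φ u ≠ 0) (hψu : ψ u = 0) (hv : ψ v ≠ 0) :
    Function.Surjective (φ.prod ψ) := by
  rintro ⟨p, q⟩
  set w := (q / ψ v) • v
  refine ⟨w + ((p - φ w) / φ u) • u, ?_⟩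
  simp [w, hψu, div_mul_cancel₀ _ hu, div_mul_cancel₀ _ hv]

section StableSets

variable [DecidableEq V] {G : SimpleGraph V}

theorem IsStableSet.card_inter_le_one {S Q : Finset V} (hS : IsStableSet G S)
    (hQ : G.IsClique (Q : Set V)) : (S ∩ Q).card ≤ 1 := by
  refine Finset.card_le_one.2 fun u hu v hv => ?_
  rw [Finset.mem_inter] at hu hv
  by_contra huv
  exact hS hu.1 hv.1 huv (hQ hu.2 hv.2 huv)

theorem IsStableSet.inter_union_sdiff {A Q S T : Finset V} (hS : IsStableSet G S)
    (hT : IsStableSet G T) (hA : ∀ u ∈ A, ∀ v, G.Adj u v → v ∈ A ∨ v ∈ Q)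
    (hST : S ∩ Q = T ∩ Q) : IsStableSet G ↑(T ∩ A ∪ S \ A) := by
  rw [IsStableSet, Finset.coe_union, Set.pairwise_union]
  refine ⟨hT.mono (by simp), hS.mono (by simp), fun u hu v hv huv => ?_⟩
  rw [Finset.coe_inter, Set.mem_inter_iff, Finset.mem_coe, Finset.mem_coe] at hu
  rw [Finset.mem_coe, Finset.mem_sdiff] at hv
  have hvT : G.Adj u v → v ∈ T := fun huv => by
    have hvQ := (hA u hu.2 v huv).resolve_left hv.2
    exact (Finset.mem_inter.1 (hST ▸ Finset.mem_inter.2 ⟨hv.1, hvQ⟩)).1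
  exact ⟨fun h => hT hu.1 (hvT h) huv h, fun h => hT hu.1 (hvT h.symm) huv h.symm⟩

end StableSets

theorem Finset.sum_sub_singleton_eq_of_card_le_one {α M : Type*} [AddCommGroup M]
    (g : Finset α → M) {R : Finset α} (hR : R.card ≤ 1) :
    ∑ q ∈ R, (g ∅ - g {q}) = g ∅ - g R := by
  rcases Nat.le_one_iff_eq_zero_or_eq_one.1 hR with h | h
  · simp [Finset.card_eq_zero.1 h]
  · obtain ⟨q, rfl⟩ := Finset.card_eq_one.1 h
    simp

section TightStableSets

variable [Fintype V] [DecidableEq V] {G : SimpleGraph V} {a : V → ℝ} {b : ℝ}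

def incidenceVector (S : Finset V) : V → ℝ := fun i => if i ∈ S then 1 else 0

theorem incidenceVector_mem_STAB {S : Finset V} (hS : IsStableSet G S) :
    incidenceVector S ∈ STAB G :=
  subset_convexHull ℝ _ ⟨S, hS, rfl⟩

theorem dotProduct_incidenceVector (a : V → ℝ) (S : Finset V) :
    a ⬝ᵥ incidenceVector S = ∑ i ∈ S, a i := by
  simp [dotProduct, incidenceVector]

variable (G a b) in
def IsTightStableSet (S : Finset V) : Prop :=
  IsStableSet G S ∧ ∑ i ∈ S, a i = b

variable {A Q : Finset V}

theorem IsTightStableSet.sum_inter_le (hvalid : ∀ x ∈ STAB G, a ⬝ᵥ x ≤ b)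
    (hA : ∀ u ∈ A, ∀ v, G.Adj u v → v ∈ A ∨ v ∈ Q) {S T : Finset V}
    (hS : IsTightStableSet G a b S) (hT : IsStableSet G T) (hST : S ∩ Q = T ∩ Q) :
    ∑ i ∈ T ∩ A, a i ≤ ∑ i ∈ S ∩ A, a i := by
  have hU := hvalid _ (incidenceVector_mem_STAB (hS.1.inter_union_sdiff hT hA hST))
  have hdisj : Disjoint (T ∩ A) (S \ A) :=
    Finset.disjoint_left.2 fun i hi hi' => (Finset.mem_sdiff.1 hi').2 (Finset.mem_inter.1 hi).2
  rw [dotProduct_incidenceVector, Finset.sum_union hdisj] at hU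
  linarith [Finset.sum_inter_add_sum_sdiff S A a, hS.2]

theorem IsTightStableSet.sum_inter_eq (hvalid : ∀ x ∈ STAB G, a ⬝ᵥ x ≤ b)
    (hA : ∀ u ∈ A, ∀ v, G.Adj u v → v ∈ A ∨ v ∈ Q) {S T : Finset V}
    (hS : IsTightStableSet G a b S) (hT : IsTightStableSet G a b T) (hST : S ∩ Q = T ∩ Q) :
    ∑ i ∈ S ∩ A, a i = ∑ i ∈ T ∩ A, a i :=
  le_antisymm (hT.sum_inter_le hvalid hA hS.1 hST.symm) (hS.sum_inter_le hvalid hA hT.1 hST)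

theorem exists_sum_inter_eq_apply_inter (hvalid : ∀ x ∈ STAB G, a ⬝ᵥ x ≤ b)
    (hA : ∀ u ∈ A, ∀ v, G.Adj u v → v ∈ A ∨ v ∈ Q) :
    ∃ g : Finset V → ℝ, ∀ S, IsTightStableSet G a b S → ∑ i ∈ S ∩ A, a i = g (S ∩ Q) := by
  have h : ∀ R, ∃ r, ∀ S, IsTightStableSet G a b S → S ∩ Q = R → ∑ i ∈ S ∩ A, a i = r := by
    intro R
    by_cases hR : ∃ T, IsTightStableSet G a b T ∧ T ∩ Q = R
    · obtain ⟨T, hT, rfl⟩ := hR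
      exact ⟨_, fun S hS hST => hS.sum_inter_eq hvalid hA hT hST⟩
    · exact ⟨0, fun S hS hSR => (hR ⟨S, hS, hSR⟩).elim⟩
  choose g hg using h
  exact ⟨g, fun S hS => hg _ S hS rfl⟩

theorem exists_tight_equation_of_isClique_separator (hvalid : ∀ x ∈ STAB G, a ⬝ᵥ x ≤ b)
    (hQ : G.IsClique (Q : Set V)) (hAQ : Disjoint A Q)
    (hA : ∀ u ∈ A, ∀ v, G.Adj u v → v ∈ A ∨ v ∈ Q) :
    ∃ (l : V → ℝ) (c : ℝ), (∀ i ∈ A, l i = a i) ∧ (∀ i, i ∉ A → i ∉ Q → l i = 0) ∧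
      ∀ S, IsTightStableSet G a b S → ∑ i ∈ S, l i = c := by
  obtain ⟨g, hg⟩ := exists_sum_inter_eq_apply_inter hvalid hA
  refine ⟨fun i => (if i ∈ A then a i else 0) + (if i ∈ Q then g ∅ - g {i} else 0), g ∅,
    fun i hi => ?_, fun i hiA hiQ => by simp [hiA, hiQ], fun S hS => ?_⟩
  · simp [hi, Finset.disjoint_left.1 hAQ hi]
  · rw [Finset.sum_add_distrib, Finset.sum_ite_mem, Finset.sum_ite_mem, hg S hS,
      Finset.sum_sub_singleton_eq_of_card_le_one g (hS.1.card_inter_le_one hQ)]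
    ring

theorem dotProduct_eq_of_mem_STAB (hvalid : ∀ x ∈ STAB G, a ⬝ᵥ x ≤ b) {l : V → ℝ} {c : ℝ}
    (hl : ∀ S, IsTightStableSet G a b S → ∑ i ∈ S, l i = c) {x : V → ℝ} (hx : x ∈ STAB G)
    (hxb : a ⬝ᵥ x = b) : l ⬝ᵥ x = c :=
  LinearMap.apply_eq_of_mem_convexHull_of_apply_eq (φ := dotProductBilin ℝ ℝ a)
    (ψ := dotProductBilin ℝ ℝ l)
    (by rintro _ ⟨S, hS, rfl⟩; exact hvalid _ (incidenceVector_mem_STAB hS))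
    (by
      rintro _ ⟨S, hS, rfl⟩ hSb
      change a ⬝ᵥ incidenceVector S = b at hSb
      change l ⬝ᵥ incidenceVector S = c
      rw [dotProduct_incidenceVector] at hSb ⊢
      exact hl S ⟨hS, hSb⟩)
    hx hxb

theorem not_hasFullSupportFacet_of_isClique_separator (hQ : G.IsClique (Q : Set V))
    (hAQ : Disjoint A Q) (hA : ∀ u ∈ A, ∀ v, G.Adj u v → v ∈ A ∨ v ∈ Q) {x y : V} (hx : x ∈ A)
    (hyA : y ∉ A) (hyQ : y ∉ Q) : ¬ HasFullSupportFacet G := by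
  rintro ⟨a, b, ha, hvalid, f, hf, hfm⟩
  obtain ⟨l, c, hlA, hl0, hl⟩ := exists_tight_equation_of_isClique_separator hvalid hQ hAQ hA
  have hsurj : Function.Surjective ((dotProductBilin ℝ ℝ a).prod (dotProductBilin ℝ ℝ l)) :=
    LinearMap.prod_surjective_of_triangular (u := Pi.single y 1) (v := Pi.single x 1)
      (by simp [ha y]) (by simp [hl0 y hyA hyQ]) (by simp [hlA x hx, ha x])
  have hfbc : ∀ m, (a ⬝ᵥ f m, l ⬝ᵥ f m) = (b, c) := fun m =>
    Prod.ext (hfm m).2 (dotProduct_eq_of_mem_STAB hvalid hl (hfm m).1 (hfm m).2)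
  have hcard := hf.card_add_finrank_le hsurj fun m m' => by simp [hfbc]
  simp at hcard

end TightStableSets

theorem SimpleGraph.exists_separator_of_not_reachable_induce {G : SimpleGraph V} {Q : Set V}
    {x y : ↥Qᶜ} (hxy : ¬ (G.induce Qᶜ).Reachable x y) :
    ∃ A : Set V, Disjoint A Q ∧ (∀ u ∈ A, ∀ v, G.Adj u v → v ∈ A ∨ v ∈ Q) ∧ ↑x ∈ A ∧ ↑y ∉ A := by
  refine ⟨Subtype.val '' {v | (G.induce Qᶜ).Reachable x v}, ?_, ?_, ⟨x, .refl x, rfl⟩, ?_⟩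
  · exact Set.disjoint_left.2 fun _ ⟨v, _, hv⟩ => hv ▸ v.2
  · rintro _ ⟨u, hu, rfl⟩ v huv
    by_cases hv : v ∈ Q
    · exact .inr hv
    · exact .inl ⟨⟨v, hv⟩, hu.trans (SimpleGraph.Adj.reachable (by exact huv)), rfl⟩
  · rintro ⟨z, hz, hzy⟩
    exact hxy (Subtype.ext hzy ▸ hz)

theorem stmt16_general {V : Type*} [Fintype V] [DecidableEq V] (G : SimpleGraph V)
    (hf : HasFullSupportFacet G) :
    ¬ ∃ Q : Set V, G.IsClique Q ∧
      ∃ x y : ↥(Qᶜ), ¬ (G.induce (Qᶜ)).Reachable x y := by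
  classical
  rintro ⟨Q, hQ, x, y, hxy⟩
  obtain ⟨A, hAQ, hA, hx, hy⟩ := G.exists_separator_of_not_reachable_induce hxy
  refine not_hasFullSupportFacet_of_isClique_separator (Q := Q.toFinset) (A := A.toFinset)
    (by simpa using hQ) (by simpa using hAQ) (by simpa using hA) (Set.mem_toFinset.2 hx)
    (Set.mem_toFinset.not.2 hy) (Set.mem_toFinset.not.2 y.2) hf

/-- a facet-defining graph (STAB(G) has a full-support facet) with at least
two vertices has no clique cutset. -/
theorem stmt16 {V : Type*} [Fintype V] [DecidableEq V] (G : SimpleGraph V)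
    (hV : 2 ≤ Fintype.card V) (hf : HasFullSupportFacet G) :
    ¬ ∃ Q : Set V, G.IsClique Q ∧
      ∃ x y : ↥(Qᶜ), ¬ (G.induce (Qᶜ)).Reachable x y :=
  stmt16_general G hf
end
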